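/- Let y_1, …, y_m be distinct real support nodes, x_1, …, x_n distinct real test nodes disjoint from the support nodes, L ∈ ℂ^{n×m} the Loewner matrix with entries L_{kj} = (e^{i x_k} − e^{i y_j})/(x_k − y_j), and K ∈ ℂ^{m×m}, R ∈ ℂ^{n×n} the diagonal phase matrices with K_{jj} = (1 − e^{−i y_j})/|1 − e^{−i y_j}| if e^{−i y_j} ≠ 1, K_{jj} = i otherwise, and R_{kk} = (1 − e^{−i x_k})/|1 − e^{−i x_k}| if e^{−i x_k} ≠ 1, R_{kk} = i otherwise. Let L̂ = −i R L K (a real n×m matrix), and suppose L̂ V̂ = Û S is a real singular value decomposition with V̂ᵀV̂ = I, ÛᵀÛ = I, and S = diag(σ_1, …, σ_m) with σ_1 ≥ … ≥ σ_m ≥ 0. Then w̃ = i K V̂ e_m is a unit vector in ℂ^m with ‖L w̃‖_2 = σ_m, and ‖L u‖_2 ≥ σ_m for every unit vector u ∈ ℂ^m; i.e., w̃ minimizes the linearized error ‖L u‖_2 over unit vectors. -/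

import Mathlib

/-!
Since `R` and `K` are diagonal with unimodular entries, substituting `u = K c` gives
`‖L u‖ = ‖L̂ c‖` and `‖u‖ = ‖c‖`. As `L̂` is real, `‖L̂ c‖² = ‖L̂ (Re c)‖² + ‖L̂ (Im c)‖²`, and for real
`v` the SVD gives `‖L̂ v‖² = ∑ σ_j² (V̂ᵀ v)_j² ≥ σ_m² ‖v‖²`, with equality at `v = V̂ e_m`. The vector
`w̃ = i K V̂ e_m` corresponds to `c = i V̂ e_m`.
-/

open Matrix
open scoped Classical
open scoped ComplexConjugate

namespace Matrix

variable {R ι κ : Type*} [Fintype ι] [Fintype κ]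

section Real

variable [DecidableEq κ]

theorem sum_sq_mulVec_of_transpose_mul_self_eq_one [CommSemiring R] {U : Matrix ι κ R}
    (hU : Uᵀ * U = 1) (d : κ → R) : ∑ i, (U *ᵥ d) i ^ 2 = ∑ j, d j ^ 2 := by
  have h : (U *ᵥ d) ⬝ᵥ (U *ᵥ d) = ((Uᵀ * U) *ᵥ d) ⬝ᵥ d := by
    rw [dotProduct_mulVec, ← mulVec_mulVec, mulVec_transpose]
  simpa only [hU, one_mulVec, dotProduct, sq] using h

theorem sum_sq_col_of_transpose_mul_self_eq_one [CommSemiring R] {U : Matrix ι κ R}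
    (hU : Uᵀ * U = 1) (j : κ) : ∑ i, U i j ^ 2 = 1 := by
  simpa [mulVec_single_one, Pi.single_apply] using
    sum_sq_mulVec_of_transpose_mul_self_eq_one hU (Pi.single j 1)

section SVD

variable [CommRing R] {A : Matrix ι κ R} {V : Matrix κ κ R} {U : Matrix ι κ R} {σ : κ → R}

theorem sum_sq_mulVec_of_svd (hsvd : A * V = U * diagonal σ) (hV : Vᵀ * V = 1)
    (hU : Uᵀ * U = 1) (w : κ → R) :
    ∑ i, (A *ᵥ w) i ^ 2 = ∑ j, (σ j * (Vᵀ *ᵥ w) j) ^ 2 := by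
  have hw : V *ᵥ (Vᵀ *ᵥ w) = w := by
    rw [mulVec_mulVec, mul_eq_one_comm.mp hV, one_mulVec]
  conv_lhs => rw [← hw, mulVec_mulVec, hsvd, ← mulVec_mulVec,
    sum_sq_mulVec_of_transpose_mul_self_eq_one hU]
  simp only [mulVec_diagonal]

theorem sum_sq_mulVec_col_of_svd (hsvd : A * V = U * diagonal σ) (hV : Vᵀ * V = 1)
    (hU : Uᵀ * U = 1) (e : κ) : ∑ i, (A *ᵥ fun j => V j e) i ^ 2 = σ e ^ 2 := by
  have hcol : Vᵀ *ᵥ (fun j => V j e) = Pi.single e 1 := by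
    rw [show (fun j => V j e) = V *ᵥ Pi.single e 1 from (mulVec_single_one V e).symm,
      mulVec_mulVec, hV, one_mulVec]
  rw [sum_sq_mulVec_of_svd hsvd hV hU, hcol]
  simp [Pi.single_apply]

theorem sq_mul_sum_sq_le_sum_sq_mulVec_of_svd [LinearOrder R] [IsStrictOrderedRing R]
    (hsvd : A * V = U * diagonal σ) (hV : Vᵀ * V = 1) (hU : Uᵀ * U = 1)
    {s : R} (hs0 : 0 ≤ s) (hs : ∀ j, s ≤ σ j) (w : κ → R) :
    s ^ 2 * ∑ j, w j ^ 2 ≤ ∑ i, (A *ᵥ w) i ^ 2 := by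
  have hVt : Vᵀᵀ * Vᵀ = 1 := by rw [transpose_transpose, mul_eq_one_comm.mp hV]
  rw [sum_sq_mulVec_of_svd hsvd hV hU, ← sum_sq_mulVec_of_transpose_mul_self_eq_one hVt,
    Finset.mul_sum]
  gcongr with j
  rw [mul_pow]
  gcongr
  exact hs j

end SVD

end Real

section Complex

open Complex

theorem norm_smul_diagonal_mul_mul_diagonal_mulVec [DecidableEq ι] [DecidableEq κ]
    {a : ℂ} (ha : ‖a‖ = 1) {r : ι → ℂ} (hr : ∀ i, ‖r i‖ = 1) {k : κ → ℂ} (hk : ∀ j, ‖k j‖ = 1)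
    (L : Matrix ι κ ℂ) (u : κ → ℂ) (i : ι) :
    ‖((a • (diagonal r * L * diagonal k)) *ᵥ fun j => conj (k j) * u j) i‖ = ‖(L *ᵥ u) i‖ := by
  have hkk : ∀ j, k j * conj (k j) = 1 := fun j => by
    rw [mul_conj', hk, ofReal_one, one_pow]
  have h : ((a • (diagonal r * L * diagonal k)) *ᵥ fun j => conj (k j) * u j) i =
      a * r i * (L *ᵥ u) i := by
    simp only [mulVec, dotProduct, Matrix.smul_apply, mul_diagonal, diagonal_mul, smul_eq_mul,
      Finset.mul_sum]
    refine Finset.sum_congr rfl fun j _ => ?_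
    linear_combination a * r i * L i j * u j * hkk j
  rw [h, norm_mul, norm_mul, ha, hr, one_mul, one_mul]

theorem sum_sq_norm_map_ofReal_mulVec (A : Matrix ι κ ℝ) (c : κ → ℂ) :
    ∑ i, ‖(A.map (fun a => (a : ℂ)) *ᵥ c) i‖ ^ 2 =
      ∑ i, (A *ᵥ fun j => (c j).re) i ^ 2 + ∑ i, (A *ᵥ fun j => (c j).im) i ^ 2 := by
  rw [← Finset.sum_add_distrib]
  refine Finset.sum_congr rfl fun i _ => ?_
  rw [Complex.sq_norm, normSq_apply]
  simp only [mulVec, dotProduct, re_sum, im_sum, map_apply, re_ofReal_mul, im_ofReal_mul, sq]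

theorem sum_sq_norm_map_ofReal_mulVec_I_mul (A : Matrix ι κ ℝ) (v : κ → ℝ) :
    ∑ i, ‖(A.map (fun a => (a : ℂ)) *ᵥ fun j => I * v j) i‖ ^ 2 = ∑ i, (A *ᵥ v) i ^ 2 := by
  rw [sum_sq_norm_map_ofReal_mulVec]
  simp only [I_mul_re, I_mul_im, ofReal_re, ofReal_im, neg_zero]
  simp [← Pi.zero_def]

theorem sq_mul_sum_sq_norm_le_of_svd [DecidableEq κ] {A : Matrix ι κ ℝ} {V : Matrix κ κ ℝ}
    {U : Matrix ι κ ℝ} {σ : κ → ℝ} (hsvd : A * V = U * diagonal σ) (hV : Vᵀ * V = 1)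
    (hU : Uᵀ * U = 1) {s : ℝ} (hs0 : 0 ≤ s) (hs : ∀ j, s ≤ σ j) (c : κ → ℂ) :
    s ^ 2 * ∑ j, ‖c j‖ ^ 2 ≤ ∑ i, ‖(A.map (fun a => (a : ℂ)) *ᵥ c) i‖ ^ 2 := by
  have hc : ∑ j, ‖c j‖ ^ 2 = ∑ j, (c j).re ^ 2 + ∑ j, (c j).im ^ 2 := by
    simp only [Complex.sq_norm, normSq_apply, ← sq, Finset.sum_add_distrib]
  rw [sum_sq_norm_map_ofReal_mulVec, hc, mul_add]
  exact add_le_add (sq_mul_sum_sq_le_sum_sq_mulVec_of_svd hsvd hV hU hs0 hs _)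
    (sq_mul_sum_sq_le_sum_sq_mulVec_of_svd hsvd hV hU hs0 hs _)

end Complex

end Matrix

noncomputable def Complex.unitPhase (z : ℂ) : ℂ :=
  if z ≠ 1 then (1 - z) / (‖1 - z‖ : ℂ) else Complex.I

theorem Complex.norm_unitPhase (z : ℂ) : ‖unitPhase z‖ = 1 := by
  unfold Complex.unitPhase
  split_ifs with h
  · have : ‖1 - z‖ ≠ 0 := norm_ne_zero_iff.mpr (sub_ne_zero.mpr (Ne.symm h))
    rw [norm_div, Complex.norm_real, norm_norm, div_self this]
  · exact Complex.norm_I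

/-- From a real SVD of the re-scaled Loewner matrix L̂ = -i R L K,
the vector w̃ = i K V̂ e_m is a unit vector with ‖L w̃‖₂ = σ_m, and it minimizes
the linearized error ‖L u‖₂ over all unit vectors u. -/
theorem stmt_17 (m n : ℕ) (hm : 0 < m)
    (y : Fin m → ℝ)
    (x : Fin n → ℝ)
    (L : Matrix (Fin n) (Fin m) ℂ)
    (K : Matrix (Fin m) (Fin m) ℂ)
    (hK : K = Matrix.diagonal fun j =>
      if Complex.exp (-(Complex.I * (y j : ℝ))) ≠ 1 then
        (1 - Complex.exp (-(Complex.I * (y j : ℝ))))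
          / (‖1 - Complex.exp (-(Complex.I * (y j : ℝ)))‖ : ℂ)
      else Complex.I)
    (R : Matrix (Fin n) (Fin n) ℂ)
    (hR : R = Matrix.diagonal fun k =>
      if Complex.exp (-(Complex.I * (x k : ℝ))) ≠ 1 then
        (1 - Complex.exp (-(Complex.I * (x k : ℝ))))
          / (‖1 - Complex.exp (-(Complex.I * (x k : ℝ)))‖ : ℂ)
      else Complex.I)
    -- L̂ = -i R L K is a real matrix:
    (Lhat : Matrix (Fin n) (Fin m) ℝ)
    (hLhat : Lhat.map (fun a => (a : ℂ)) = (-Complex.I) • (R * L * K))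
    -- real singular value decomposition of L̂ with decreasing nonnegative singular values:
    (Vhat : Matrix (Fin m) (Fin m) ℝ) (Uhat : Matrix (Fin n) (Fin m) ℝ)
    (σ : Fin m → ℝ)
    (hsvd : Lhat * Vhat = Uhat * Matrix.diagonal σ)
    (hV : Vhatᵀ * Vhat = 1) (hU : Uhatᵀ * Uhat = 1)
    (hσdec : ∀ i j : Fin m, i ≤ j → σ j ≤ σ i) (hσ0 : ∀ i, 0 ≤ σ i)
    -- w̃ = i K V̂ e_m, where e_m is the last standard basis vector:
    (wtilde : Fin m → ℂ)
    (hwtilde : wtilde = Complex.I •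
      K.mulVec fun j => ((Vhat j (⟨m - 1, by omega⟩ : Fin m) : ℝ) : ℂ)) :
    (∑ j, ‖wtilde j‖ ^ 2 = 1) ∧
    Real.sqrt (∑ k, ‖L.mulVec wtilde k‖ ^ 2) = σ (⟨m - 1, by omega⟩ : Fin m) ∧
    (∀ u : Fin m → ℂ, (∑ j, ‖u j‖ ^ 2 = 1) →
      σ (⟨m - 1, by omega⟩ : Fin m) ≤ Real.sqrt (∑ k, ‖L.mulVec u k‖ ^ 2)) := by
  set e : Fin m := ⟨m - 1, by omega⟩
  have hσe : ∀ j, σ e ≤ σ j := fun j => hσdec j e (Nat.le_sub_one_of_lt j.isLt)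
  obtain ⟨k, hk, rfl⟩ : ∃ k : Fin m → ℂ, (∀ j, ‖k j‖ = 1) ∧ K = diagonal k :=
    ⟨_, fun j => Complex.norm_unitPhase _, hK⟩
  obtain ⟨r, hr, rfl⟩ : ∃ r : Fin n → ℂ, (∀ i, ‖r i‖ = 1) ∧ R = diagonal r :=
    ⟨_, fun i => Complex.norm_unitPhase _, hR⟩
  have hL : ∀ u, ∑ i, ‖(L *ᵥ u) i‖ ^ 2 =
      ∑ i, ‖(Lhat.map (fun a => (a : ℂ)) *ᵥ fun j => conj (k j) * u j) i‖ ^ 2 := fun u => by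
    simp only [hLhat, norm_smul_diagonal_mul_mul_diagonal_mulVec (a := -Complex.I) (by simp) hr hk]
  have hw : (fun j => conj (k j) * wtilde j) = fun j => Complex.I * Vhat j e := by
    ext j
    have hkk : conj (k j) * k j = 1 := by
      rw [Complex.conj_mul', hk, Complex.ofReal_one, one_pow]
    simp only [hwtilde, Pi.smul_apply, mulVec_diagonal, smul_eq_mul]
    linear_combination Complex.I * Vhat j e * hkk
  refine ⟨?_, ?_, fun u hu => ?_⟩
  · simpa [hwtilde, mulVec_diagonal, hk] using sum_sq_col_of_transpose_mul_self_eq_one hV e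
  · rw [hL, hw, sum_sq_norm_map_ofReal_mulVec_I_mul, sum_sq_mulVec_col_of_svd hsvd hV hU,
      Real.sqrt_sq (hσ0 e)]
  · have h := sq_mul_sum_sq_norm_le_of_svd hsvd hV hU (hσ0 e) hσe fun j => conj (k j) * u j
    simp only [norm_mul, Complex.norm_conj, hk, one_mul, hu, mul_one, ← hL] at h
    exact Real.le_sqrt_of_sq_le h
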